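/- arXiv:1903.05481 — 4 statements merged into one kernel-verified Lean document; each statement's English description precedes it below -/
import Mathlib

section
/- Let R_1,...,R_L be independent Rayleigh random variables with parameters Ω_i > 0. Define P(γ) = P(Σ R_i ≤ γ) and P̃(γ) = P(Σ R_i² ≤ γ²). Then limsup_{γ → 0⁺} P̃(γ)/P(γ) ≤ L^{2L}; in particular the ratio P̃(γ)/P(γ) is bounded as γ → 0⁺ (bounded relative error of the sample-rejection importance sampling estimator). -/
open MeasureTheory ProbabilityTheory Real Topology Filter

lemma expm1_slope : Tendsto (fun x : ℝ => (exp x - 1)/x) (𝓝[≠] 0) (𝓝 1) := by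
  have h := hasDerivAt_exp (0:ℝ)
  rw [hasDerivAt_iff_tendsto_slope] at h
  have : (slope rexp 0) = fun x : ℝ => (exp x - 1)/x := by
    funext x; simp [slope_def_field, Real.exp_zero]
  rwa [this, Real.exp_zero] at h

lemma base_tendsto (c : ℝ) (hc : 0 < c) :
    Tendsto (fun γ : ℝ => (1 - exp (-(γ^2 * c))) / (γ^2 * c)) (𝓝[>] 0) (𝓝 1) := by
  have hφ : Tendsto (fun γ : ℝ => -(γ^2 * c)) (𝓝[>] 0) (𝓝[≠] 0) := by
    rw [tendsto_nhdsWithin_iff]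
    constructor
    · have h0 : Tendsto (fun γ : ℝ => -(γ^2 * c)) (𝓝 0) (𝓝 (-(0^2 * c))) :=
        (((continuous_pow 2).mul continuous_const).neg).tendsto 0
      simpa using h0.mono_left nhdsWithin_le_nhds
    · filter_upwards [self_mem_nhdsWithin] with γ (hγ : 0 < γ)
      have hpos : 0 < γ^2 * c := mul_pos (pow_pos hγ 2) hc
      exact Set.mem_compl_singleton_iff.mpr (by linarith)
  have h := expm1_slope.comp hφ
  refine h.congr fun γ => ?_
  simp only [Function.comp]
  ring

lemma alg_id (p q s t k : ℝ) (hq : q ≠ 0) (hs : s ≠ 0) (ht : t ≠ 0) (hk : k ≠ 0)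
    (hst : s = k * t) : (p/s)/(q/t) * k = p/q := by
  subst hst; field_simp

lemma factor_tendsto (Om : ℝ) (hOm : 0 < Om) (L : ℕ) (hL : 1 ≤ L) :
    Tendsto (fun γ : ℝ => (1 - exp (-γ^2/Om)) / (1 - exp (-(γ/(L:ℝ))^2/Om)))
      (𝓝[>] 0) (𝓝 ((L:ℝ)^2)) := by
  have hLpos : (0:ℝ) < (L:ℝ) := by exact_mod_cast hL
  have hOm' : Om ≠ 0 := hOm.ne'
  have hL' : (L:ℝ) ≠ 0 := hLpos.ne'
  have hapos : (0:ℝ) < Om⁻¹ := by positivity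
  have hcpos : (0:ℝ) < ((L:ℝ)^2 * Om)⁻¹ :=
    inv_pos.mpr (mul_pos (pow_pos hLpos 2) hOm)
  have hF := base_tendsto _ hapos
  have hG := base_tendsto _ hcpos
  have hmain := (hF.div hG one_ne_zero).mul_const ((L:ℝ)^2)
  rw [one_div_one, one_mul] at hmain
  refine hmain.congr' ?_
  filter_upwards [self_mem_nhdsWithin] with γ (hγ : 0 < γ)
  have h1 : -γ^2/Om = -(γ^2 * Om⁻¹) := by ring
  have h2 : -(γ/(L:ℝ))^2/Om = -(γ^2 * ((L:ℝ)^2 * Om)⁻¹) := by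
    rw [mul_inv, ← inv_pow]; ring
  rw [h1, h2]
  have hq : (0:ℝ) < 1 - exp (-(γ^2 * ((L:ℝ)^2 * Om)⁻¹)) := by
    have hpos : 0 < γ^2 * ((L:ℝ)^2 * Om)⁻¹ := mul_pos (pow_pos hγ 2) hcpos
    have := Real.exp_lt_one_iff.mpr (by linarith : -(γ^2 * ((L:ℝ)^2 * Om)⁻¹) < 0)
    linarith
  refine alg_id _ _ _ _ _ hq.ne' ?_ ?_ (by positivity) ?_
  · exact (mul_pos (pow_pos hγ 2) hapos).ne'
  · exact (mul_pos (pow_pos hγ 2) hcpos).ne'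
  · rw [mul_inv, ← inv_pow]; field_simp

/-- Bounded relative error for independent Rayleigh fading: with
`P(γ) = P(∑ R_i ≤ γ)` and `P̃(γ) = P(∑ R_i² ≤ γ²)`, the ratio `P̃(γ)/P(γ)`
satisfies `limsup_{γ→0⁺} P̃(γ)/P(γ) ≤ L^{2L}`; in particular it stays bounded
as `γ → 0⁺`. -/
theorem rayleigh_bounded_relative_error
    {Ω : Type*} [MeasurableSpace Ω] (μ : Measure Ω) [IsProbabilityMeasure μ]
    (L : ℕ) (hL : 1 ≤ L) (R : Fin L → Ω → ℝ) (Om : Fin L → ℝ) (hOm : ∀ i, 0 < Om i)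
    (hmeas : ∀ i, Measurable (R i))
    (hindep : iIndepFun R μ)
    (hnonneg : ∀ i ω, 0 ≤ R i ω)
    (hcdf : ∀ i x, 0 ≤ x → μ {ω | R i ω ≤ x} = ENNReal.ofReal (1 - exp (-x ^ 2 / Om i))) :
    Filter.limsup
        (fun γ : ℝ =>
          (μ {ω | ∑ i, (R i ω) ^ 2 ≤ γ ^ 2}).toReal / (μ {ω | ∑ i, R i ω ≤ γ}).toReal)
        (𝓝[>] 0) ≤ (L : ℝ) ^ (2 * L) ∧
    ∃ B : ℝ, ∀ᶠ γ in 𝓝[>] (0 : ℝ),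
      (μ {ω | ∑ i, (R i ω) ^ 2 ≤ γ ^ 2}).toReal / (μ {ω | ∑ i, R i ω ≤ γ}).toReal ≤ B := by
  have hLpos : (0:ℝ) < (L:ℝ) := by exact_mod_cast hL
  set f : ℝ → ℝ := fun γ =>
    (μ {ω | ∑ i, (R i ω) ^ 2 ≤ γ ^ 2}).toReal / (μ {ω | ∑ i, R i ω ≤ γ}).toReal with hf
  set g : ℝ → ℝ := fun γ =>
    ∏ i, (1 - exp (-γ^2/Om i)) / (1 - exp (-(γ/(L:ℝ))^2/Om i)) with hg
  have hgt : Tendsto g (𝓝[>] 0) (𝓝 ((L:ℝ)^(2*L))) := by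
    have h := tendsto_finset_prod (Finset.univ : Finset (Fin L))
      (fun i _ => factor_tendsto (Om i) (hOm i) L hL)
    have heq : (∏ _i : Fin L, ((L:ℝ)^2)) = (L:ℝ)^(2*L) := by
      rw [Finset.prod_const, Finset.card_univ, Fintype.card_fin, ← pow_mul, mul_comm]
    rwa [heq] at h
  have key : ∀ x : ℝ, 0 ≤ x →
      μ (⋂ i, {ω | R i ω ≤ x}) = ∏ i, ENNReal.ofReal (1 - exp (-x^2/Om i)) := by
    intro x hx
    rw [hindep.meas_iInter (s := fun i => {ω | R i ω ≤ x})
      (fun i => ⟨Set.Iic x, measurableSet_Iic, rfl⟩)]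
    exact Finset.prod_congr rfl fun i _ => hcdf i x hx
  have hfg : ∀ γ : ℝ, 0 < γ → f γ ≤ g γ := by
    intro γ hγ
    have hγL : 0 < γ / (L:ℝ) := div_pos hγ hLpos
    have hppos : ∀ i : Fin L, (0:ℝ) < 1 - exp (-γ^2/Om i) := by
      intro i
      have h0 : 0 < γ^2/Om i := div_pos (pow_pos hγ 2) (hOm i)
      have := Real.exp_lt_one_iff.mpr (by rw [neg_div]; linarith : -γ^2/Om i < 0)
      linarith
    have hqpos : ∀ i : Fin L, (0:ℝ) < 1 - exp (-(γ/(L:ℝ))^2/Om i) := by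
      intro i
      have h0 : 0 < (γ/(L:ℝ))^2/Om i := div_pos (pow_pos hγL 2) (hOm i)
      have := Real.exp_lt_one_iff.mpr (by rw [neg_div]; linarith : -(γ/(L:ℝ))^2/Om i < 0)
      linarith
    have hnum : μ {ω | ∑ i, (R i ω)^2 ≤ γ^2} ≤ ∏ i, ENNReal.ofReal (1 - exp (-γ^2/Om i)) := by
      rw [← key γ hγ.le]
      apply measure_mono
      intro ω hω
      rw [Set.mem_iInter]
      intro i
      have hle : R i ω ^ 2 ≤ γ ^ 2 :=
        le_trans (Finset.single_le_sum (f := fun j => R j ω ^ 2)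
          (fun j _ => sq_nonneg _) (Finset.mem_univ i)) hω
      exact (pow_le_pow_iff_left₀ (hnonneg i ω) hγ.le two_ne_zero).mp hle
    have hden : (∏ i, ENNReal.ofReal (1 - exp (-(γ/(L:ℝ))^2/Om i)))
        ≤ μ {ω | ∑ i, R i ω ≤ γ} := by
      rw [← key (γ/(L:ℝ)) hγL.le]
      apply measure_mono
      intro ω hω
      rw [Set.mem_iInter] at hω
      have hsum : ∑ i, R i ω ≤ ∑ _i : Fin L, γ/(L:ℝ) :=
        Finset.sum_le_sum (fun i _ => hω i)
      simp only [Finset.sum_const, Finset.card_univ, Fintype.card_fin, nsmul_eq_mul] at hsum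
      have hEq : (L:ℝ) * (γ/(L:ℝ)) = γ := by field_simp
      exact Set.mem_setOf.mpr (by rw [hEq] at hsum; exact hsum)
    have hPne : (∏ i, ENNReal.ofReal (1 - exp (-γ^2/Om i))) ≠ ⊤ :=
      (ENNReal.prod_lt_top (fun i _ => ENNReal.ofReal_lt_top)).ne
    have htoP : (∏ i, ENNReal.ofReal (1 - exp (-γ^2/Om i))).toReal
        = ∏ i, (1 - exp (-γ^2/Om i)) := by
      rw [ENNReal.toReal_prod]
      exact Finset.prod_congr rfl fun i _ => ENNReal.toReal_ofReal (hppos i).le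
    have htoQ : (∏ i, ENNReal.ofReal (1 - exp (-(γ/(L:ℝ))^2/Om i))).toReal
        = ∏ i, (1 - exp (-(γ/(L:ℝ))^2/Om i)) := by
      rw [ENNReal.toReal_prod]
      exact Finset.prod_congr rfl fun i _ => ENNReal.toReal_ofReal (hqpos i).le
    have h1 : (μ {ω | ∑ i, (R i ω)^2 ≤ γ^2}).toReal ≤ ∏ i, (1 - exp (-γ^2/Om i)) :=
      htoP ▸ ENNReal.toReal_mono hPne hnum
    have h2 : (∏ i, (1 - exp (-(γ/(L:ℝ))^2/Om i))) ≤ (μ {ω | ∑ i, R i ω ≤ γ}).toReal :=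
      htoQ ▸ ENNReal.toReal_mono (measure_ne_top μ _) hden
    have hQp : 0 < ∏ i, (1 - exp (-(γ/(L:ℝ))^2/Om i)) :=
      Finset.prod_pos (fun i _ => hqpos i)
    calc f γ ≤ (∏ i, (1 - exp (-γ^2/Om i))) / (∏ i, (1 - exp (-(γ/(L:ℝ))^2/Om i))) :=
          div_le_div₀ (Finset.prod_nonneg fun i _ => (hppos i).le) h1 hQp h2
      _ = g γ := (Finset.prod_div_distrib _ _).symm
  have hev : f ≤ᶠ[𝓝[>] (0:ℝ)] g := by
    filter_upwards [self_mem_nhdsWithin] with γ (hγ : 0 < γ)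
    exact hfg γ hγ
  have hgB : ∀ᶠ γ in 𝓝[>] (0:ℝ), g γ ≤ (L:ℝ)^(2*L) + 1 :=
    hgt.eventually_le_const (by linarith)
  have hfB : ∀ᶠ γ in 𝓝[>] (0:ℝ), f γ ≤ (L:ℝ)^(2*L) + 1 := by
    filter_upwards [hev, hgB] with γ h1 h2; exact h1.trans h2
  constructor
  · have hls : limsup f (𝓝[>] (0:ℝ)) ≤ limsup g (𝓝[>] (0:ℝ)) :=
      limsup_le_limsup hev (isCoboundedUnder_le_of_le _ (fun γ => div_nonneg ENNReal.toReal_nonneg ENNReal.toReal_nonneg))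
        hgt.isBoundedUnder_le
    rwa [hgt.limsup_eq] at hls
  · exact ⟨(L:ℝ)^(2*L) + 1, hfB⟩
end

section
/- Suppose the joint CDF of a nonnegative random vector (R_1,...,R_L) satisfies P(R_1 ≤ γ, ..., R_L ≤ γ) ~ a·γ^{2L} as γ → 0⁺ for some constant a > 0. Then, with P(γ) = P(Σ R_i ≤ γ) and P̃(γ) = P(Σ R_i² ≤ γ²), we have limsup_{γ→0⁺} P̃(γ)/P(γ) ≤ L^{2L}. -/
open MeasureTheory Topology Filter

/-- If the joint CDF of a nonnegative random vector `(R_1,…,R_L)` satisfies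
`P(R_1 ≤ γ, …, R_L ≤ γ) ~ a·γ^{2L}` as `γ → 0⁺` for some `a > 0`, then with
`P(γ) = P(∑ R_i ≤ γ)` and `P̃(γ) = P(∑ R_i² ≤ γ²)` we have
`limsup_{γ→0⁺} P̃(γ)/P(γ) ≤ L^{2L}`. -/
theorem bounded_relative_error_of_joint_cdf_asymptotic
    {W : Type*} [MeasurableSpace W] (μ : Measure W) [IsProbabilityMeasure μ]
    (L : ℕ) (hL : 1 ≤ L) (R : Fin L → W → ℝ)
    (hmeas : ∀ i, Measurable (R i))
    (hnonneg : ∀ i ω, 0 ≤ R i ω)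
    (a : ℝ) (ha : 0 < a)
    (hasym : Filter.Tendsto
      (fun γ : ℝ => (μ {ω | ∀ i, R i ω ≤ γ}).toReal / (a * γ ^ (2 * L)))
      (𝓝[>] 0) (𝓝 1)) :
    Filter.limsup
        (fun γ : ℝ =>
          (μ {ω | ∑ i, (R i ω) ^ 2 ≤ γ ^ 2}).toReal / (μ {ω | ∑ i, R i ω ≤ γ}).toReal)
        (𝓝[>] 0) ≤ (L : ℝ) ^ (2 * L) := by
  set F : ℝ → ℝ := fun γ => (μ {ω | ∀ i, R i ω ≤ γ}).toReal with hF
  set q : ℝ → ℝ := fun γ => F γ / (a * γ ^ (2 * L)) with hq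
  have hLpos : (0 : ℝ) < L := by exact_mod_cast hL
  -- the map γ ↦ γ / L preserves 𝓝[>] 0
  have hmap : Tendsto (fun γ : ℝ => γ / L) (𝓝[>] 0) (𝓝[>] 0) := by
    apply tendsto_nhdsWithin_of_tendsto_nhds_of_eventually_within
    · have : Tendsto (fun γ : ℝ => γ / L) (𝓝 0) (𝓝 (0 / L)) :=
        tendsto_id.div_const _
      simpa using this.mono_left nhdsWithin_le_nhds
    · filter_upwards [self_mem_nhdsWithin] with γ (hγ : 0 < γ)
      exact div_pos hγ hLpos
  -- eventual positivity of F on 𝓝[>] 0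
  have hFpos : ∀ᶠ γ in 𝓝[>] (0 : ℝ), 0 < F γ := by
    have h2 : ∀ᶠ γ in 𝓝[>] (0 : ℝ), (1 : ℝ) / 2 < q γ :=
      hasym.eventually (eventually_gt_nhds (by norm_num))
    filter_upwards [h2] with γ hγ
    by_contra h
    push_neg at h
    have hF0 : F γ = 0 := le_antisymm h ENNReal.toReal_nonneg
    rw [hq] at hγ
    simp only [hF0, zero_div] at hγ
    norm_num at hγ
  -- the comparison function
  set g : ℝ → ℝ := fun γ => q γ / q (γ / L) * (L : ℝ) ^ (2 * L) with hg
  have hgtend : Tendsto g (𝓝[>] 0) (𝓝 ((L : ℝ) ^ (2 * L))) := by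
    have h1 : Tendsto (fun γ : ℝ => q γ / q (γ / L)) (𝓝[>] 0) (𝓝 (1 / 1)) :=
      hasym.div (hasym.comp hmap) (by norm_num)
    have := h1.mul_const ((L : ℝ) ^ (2 * L))
    simpa using this
  -- eventual pointwise bound
  have hbound : ∀ᶠ γ in 𝓝[>] (0 : ℝ),
      (μ {ω | ∑ i, (R i ω) ^ 2 ≤ γ ^ 2}).toReal / (μ {ω | ∑ i, R i ω ≤ γ}).toReal
        ≤ g γ := by
    filter_upwards [self_mem_nhdsWithin, hFpos, hmap.eventually hFpos] with γ
      (hγ0 : 0 < γ) hFγ hFγL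
    -- set inclusions
    have hsub1 : {ω | ∑ i, (R i ω) ^ 2 ≤ γ ^ 2} ⊆ {ω | ∀ i, R i ω ≤ γ} := by
      intro ω hω i
      have h1 : (R i ω) ^ 2 ≤ ∑ j, (R j ω) ^ 2 :=
        Finset.single_le_sum (fun j _ => sq_nonneg (R j ω)) (Finset.mem_univ i)
      exact le_of_pow_le_pow_left₀ two_ne_zero hγ0.le (h1.trans hω)
    have hsub2 : {ω | ∀ i, R i ω ≤ γ / L} ⊆ {ω | ∑ i, R i ω ≤ γ} := by
      intro ω hω
      calc ∑ i, R i ω ≤ ∑ _i : Fin L, (γ / L) :=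
            Finset.sum_le_sum fun i _ => hω i
        _ = L * (γ / L) := by simp [mul_comm]
        _ = γ := by field_simp
    have hnum : (μ {ω | ∑ i, (R i ω) ^ 2 ≤ γ ^ 2}).toReal ≤ F γ :=
      ENNReal.toReal_mono (measure_ne_top μ _) (measure_mono hsub1)
    have hden : F (γ / L) ≤ (μ {ω | ∑ i, R i ω ≤ γ}).toReal :=
      ENNReal.toReal_mono (measure_ne_top μ _) (measure_mono hsub2)
    have hstep : (μ {ω | ∑ i, (R i ω) ^ 2 ≤ γ ^ 2}).toReal /
        (μ {ω | ∑ i, R i ω ≤ γ}).toReal ≤ F γ / F (γ / L) :=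
      div_le_div₀ (le_trans ENNReal.toReal_nonneg (le_of_eq rfl) |>.trans hnum |>.trans le_rfl
        |> fun _ => ENNReal.toReal_nonneg.trans hnum) hnum hFγL hden
    refine hstep.trans (le_of_eq ?_)
    -- algebra: F γ / F (γ/L) = g γ
    rw [hg, hq]
    have hγpow : (0 : ℝ) < γ ^ (2 * L) := pow_pos hγ0 _
    have hγLpow : (0 : ℝ) < (γ / L) ^ (2 * L) := pow_pos (div_pos hγ0 hLpos) _
    have hkey : (γ / L) ^ (2 * L) * (L : ℝ) ^ (2 * L) = γ ^ (2 * L) := by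
      rw [← mul_pow, div_mul_cancel₀]
      exact hLpos.ne'
    field_simp
    ring_nf
    rw [mul_assoc, ← mul_pow, mul_inv_cancel₀ hLpos.ne', one_pow, mul_one]
  -- conclude via limsup comparison
  have hsup := Filter.limsup_le_limsup hbound
    (Filter.isCoboundedUnder_le_of_eventually_le (𝓝[>] (0:ℝ)) (x := 0)
      (Filter.Eventually.of_forall fun γ => div_nonneg ENNReal.toReal_nonneg
        ENNReal.toReal_nonneg))
    hgtend.isBoundedUnder_le
  calc Filter.limsup _ (𝓝[>] (0:ℝ)) ≤ Filter.limsup g (𝓝[>] 0) := hsup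
    _ = (L : ℝ) ^ (2 * L) := hgtend.limsup_eq
end

section
/- Let R_1,...,R_L be independent Rayleigh variables with parameters Ω_i, order statistics R^{(1)} ≥ ... ≥ R^{(L)}, and channel gains h_i = R_i² (exponential with means Ω_i) with order statistics h^{(i)} = (R^{(i)})². Define P(γ) = P(Σ_{i=1}^N R^{(i)} ≤ γ) and P̃(γ) = P(Σ_{i=1}^N h^{(i)} ≤ γ²). Then limsup_{γ→0⁺} P̃(γ)/P(γ) ≤ N^{2L} < ∞ (bounded relative error for GSC/EGC). -/
open MeasureTheory ProbabilityTheory Real Finset Topology Filter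

lemma gsc_aux_slope_lim (a : ℝ) :
    Tendsto (fun u : ℝ => (1 - exp (-u / a)) / u) (𝓝[≠] (0:ℝ)) (𝓝 (1 / a)) := by
  have hF : HasDerivAt (fun u : ℝ => 1 - exp (-u / a)) (1 / a) 0 := by
    have h1 : HasDerivAt (fun u : ℝ => -u / a) (-(1 : ℝ) / a) 0 := by
      simpa using ((hasDerivAt_id (0:ℝ)).neg.div_const a)
    have h2 := (Real.hasDerivAt_exp (-(0:ℝ) / a)).comp 0 h1
    have h3 := h2.const_sub 1
    refine h3.congr_deriv ?_
    rw [neg_zero, zero_div, exp_zero]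
    ring
  have := hasDerivAt_iff_tendsto_slope.mp hF
  refine this.congr (fun u => ?_)
  simp [slope_def_field]

lemma gsc_aux_div_div (A B c : ℝ) (hc : c ≠ 0) : A / c / (B / c) = A / B := by
  rcases eq_or_ne B 0 with h | h
  · simp [h]
  · field_simp

/-- Bounded relative error for GSC/EGC receivers over i.n.i.d Rayleigh fading.
Let `R_1,…,R_L` be independent Rayleigh variables with parameters `Ω_i`, with channel
gains `h_i = R_i²` (exponential with means `Ω_i`), and let `1 ≤ N ≤ L`.  With
`P(γ) = P(∑_{i=1}^N R^{(i)} ≤ γ)` (sum of the `N` largest amplitudes, expressed as all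
`N`-subsets having sum `≤ γ`) and `P̃(γ) = P(∑_{i=1}^N h^{(i)} ≤ γ²)`, we have
`limsup_{γ→0⁺} P̃(γ)/P(γ) ≤ N^{2L} < ∞`. -/
theorem gsc_egc_bounded_relative_error
    {W : Type*} [MeasurableSpace W] (μ : Measure W) [IsProbabilityMeasure μ]
    (L N : ℕ) (hN : 1 ≤ N) (hNL : N ≤ L)
    (R : Fin L → W → ℝ) (Om : Fin L → ℝ) (hOm : ∀ i, 0 < Om i)
    (hmeas : ∀ i, Measurable (R i))
    (hindep : iIndepFun R μ)
    (hnonneg : ∀ i ω, 0 ≤ R i ω)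
    (hcdf : ∀ i x, 0 ≤ x → μ {ω | R i ω ≤ x} = ENNReal.ofReal (1 - exp (-x ^ 2 / Om i))) :
    Filter.limsup
        (fun γ : ℝ =>
          (μ {ω | ∀ s : Finset (Fin L), s.card = N → ∑ i ∈ s, (R i ω) ^ 2 ≤ γ ^ 2}).toReal /
            (μ {ω | ∀ s : Finset (Fin L), s.card = N → ∑ i ∈ s, R i ω ≤ γ}).toReal)
        (𝓝[>] 0) ≤ (N : ℝ) ^ (2 * L) := by
  set ratio := fun γ : ℝ =>
      (μ {ω | ∀ s : Finset (Fin L), s.card = N → ∑ i ∈ s, (R i ω) ^ 2 ≤ γ ^ 2}).toReal /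
        (μ {ω | ∀ s : Finset (Fin L), s.card = N → ∑ i ∈ s, R i ω ≤ γ}).toReal with hratio
  have hNpos : (0:ℝ) < N := by exact_mod_cast hN
  set f := fun γ : ℝ => ∏ i : Fin L, (1 - exp (-γ ^ 2 / Om i)) with hf
  set g := fun γ : ℝ => ∏ i : Fin L, (1 - exp (-(γ / N) ^ 2 / Om i)) with hg
  have hmeasInter : ∀ c : ℝ, μ (⋂ i, {ω | R i ω ≤ c}) = ∏ i, μ {ω | R i ω ≤ c} :=
    fun c => hindep.meas_iInter (fun i => ⟨Set.Iic c, measurableSet_Iic, rfl⟩)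
  have hfac : ∀ (c a : ℝ), 0 < c → 0 < a → 0 < 1 - exp (-c ^ 2 / a) := by
    intro c a hc ha
    have h1 : exp (-c ^ 2 / a) < 1 := by
      rw [exp_lt_one_iff, neg_div]
      have : 0 < c ^ 2 / a := div_pos (by positivity) ha
      linarith
    linarith
  have hfacnn : ∀ (c a : ℝ), 0 < a → 0 ≤ 1 - exp (-c ^ 2 / a) := by
    intro c a ha
    have h1 : exp (-c ^ 2 / a) ≤ 1 := by
      rw [exp_le_one_iff, neg_div]
      have : 0 ≤ c ^ 2 / a := div_nonneg (by positivity) ha.le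
      linarith
    linarith
  have hle : ∀ᶠ γ in 𝓝[>] (0:ℝ), ratio γ ≤ f γ / g γ := by
    filter_upwards [self_mem_nhdsWithin] with γ (hγ : 0 < γ)
    have hfnn : 0 ≤ f γ := Finset.prod_nonneg fun i _ => hfacnn _ _ (hOm i)
    have hgpos : 0 < g γ := Finset.prod_pos fun i _ => hfac _ _ (div_pos hγ hNpos) (hOm i)
    have hA : (μ {ω | ∀ s : Finset (Fin L), s.card = N → ∑ i ∈ s, (R i ω) ^ 2 ≤ γ ^ 2}).toReal
        ≤ f γ := by
      have hsub : {ω | ∀ s : Finset (Fin L), s.card = N → ∑ i ∈ s, (R i ω) ^ 2 ≤ γ ^ 2}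
          ⊆ ⋂ i, {ω | R i ω ≤ γ} := by
        intro ω hω
        simp only [Set.mem_setOf_eq] at hω
        simp only [Set.mem_iInter, Set.mem_setOf_eq]
        intro i
        obtain ⟨u, hiu, -, hcard⟩ := Finset.exists_subsuperset_card_eq
          (Finset.subset_univ {i}) (by simpa using hN) (by simpa using hNL)
        have hsq : (R i ω) ^ 2 ≤ γ ^ 2 := le_trans
          (Finset.single_le_sum (fun j _ => sq_nonneg (R j ω)) (hiu (Finset.mem_singleton_self i)))
          (hω u hcard)
        exact (pow_le_pow_iff_left₀ (hnonneg i ω) hγ.le two_ne_zero).mp hsq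
      calc (μ _).toReal ≤ (μ (⋂ i, {ω | R i ω ≤ γ})).toReal :=
              ENNReal.toReal_mono (measure_ne_top μ _) (measure_mono hsub)
        _ = f γ := by
              rw [hmeasInter γ, ENNReal.toReal_prod]
              refine Finset.prod_congr rfl fun i _ => ?_
              rw [hcdf i γ hγ.le, ENNReal.toReal_ofReal (hfacnn _ _ (hOm i))]
    have hB : g γ ≤ (μ {ω | ∀ s : Finset (Fin L), s.card = N → ∑ i ∈ s, R i ω ≤ γ}).toReal := by
      have hsub : (⋂ i, {ω | R i ω ≤ γ / N})
          ⊆ {ω | ∀ s : Finset (Fin L), s.card = N → ∑ i ∈ s, R i ω ≤ γ} := by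
        intro ω hω
        simp only [Set.mem_iInter, Set.mem_setOf_eq] at hω
        intro s hs
        calc ∑ i ∈ s, R i ω ≤ ∑ _i ∈ s, γ / N := Finset.sum_le_sum fun i _ => hω i
          _ = N * (γ / N) := by rw [Finset.sum_const, hs]; ring
          _ = γ := by field_simp
      calc g γ = (μ (⋂ i, {ω | R i ω ≤ γ / N})).toReal := by
              rw [hmeasInter _, ENNReal.toReal_prod]
              refine (Finset.prod_congr rfl fun i _ => ?_).symm
              rw [hcdf i _ (by positivity), ENNReal.toReal_ofReal (hfacnn _ _ (hOm i))]
        _ ≤ _ := ENNReal.toReal_mono (measure_ne_top μ _) (measure_mono hsub)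
    exact div_le_div₀ hfnn hA hgpos hB
  have hlim : Tendsto (fun γ => f γ / g γ) (𝓝[>] (0:ℝ)) (𝓝 ((N:ℝ) ^ (2 * L))) := by
    have hsq : Tendsto (fun γ : ℝ => γ ^ 2) (𝓝[>] (0:ℝ)) (𝓝[≠] (0:ℝ)) := by
      apply tendsto_nhdsWithin_of_tendsto_nhds_of_eventually_within
      · have h0 : Tendsto (fun γ : ℝ => γ ^ 2) (𝓝 (0:ℝ)) (𝓝 (0:ℝ)) := by
          simpa using (continuous_pow 2).tendsto (0:ℝ)
        exact h0.mono_left nhdsWithin_le_nhds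
      · filter_upwards [self_mem_nhdsWithin] with γ (hγ : 0 < γ)
        exact pow_ne_zero 2 hγ.ne'
    have hfaclim : ∀ a : ℝ,
        Tendsto (fun γ : ℝ => (1 - exp (-γ ^ 2 / a)) / γ ^ 2) (𝓝[>] (0:ℝ)) (𝓝 (1 / a)) :=
      fun a => (gsc_aux_slope_lim a).comp hsq
    have key : ∀ i : Fin L, Tendsto
        (fun γ : ℝ => (1 - exp (-γ ^ 2 / Om i)) / (1 - exp (-(γ / N) ^ 2 / Om i)))
        (𝓝[>] (0:ℝ)) (𝓝 ((N:ℝ) ^ 2)) := by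
      intro i
      have hOm0 : Om i ≠ 0 := (hOm i).ne'
      have hN0 : (N:ℝ) ≠ 0 := hNpos.ne'
      have h1 := hfaclim (Om i)
      have h2 : Tendsto (fun γ : ℝ => (1 - exp (-(γ / N) ^ 2 / Om i)) / γ ^ 2)
          (𝓝[>] (0:ℝ)) (𝓝 (1 / ((N:ℝ) ^ 2 * Om i))) := by
        refine (hfaclim ((N:ℝ) ^ 2 * Om i)).congr (fun γ => ?_)
        have : -γ ^ 2 / ((N:ℝ) ^ 2 * Om i) = -(γ / N) ^ 2 / Om i := by
          field_simp
        rw [this]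
      have hne : (1 : ℝ) / ((N:ℝ) ^ 2 * Om i) ≠ 0 :=
        one_div_ne_zero (mul_ne_zero (pow_ne_zero 2 hN0) hOm0)
      have h3 := h1.div h2 hne
      have hval : (1 / Om i) / (1 / ((N:ℝ) ^ 2 * Om i)) = (N:ℝ) ^ 2 := by
        field_simp
      rw [← hval]
      refine Tendsto.congr' ?_ h3
      filter_upwards [self_mem_nhdsWithin] with γ (hγ : 0 < γ)
      exact gsc_aux_div_div _ _ _ (pow_ne_zero 2 hγ.ne')
    have hprod : Tendsto (fun γ : ℝ => ∏ i : Fin L,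
        ((1 - exp (-γ ^ 2 / Om i)) / (1 - exp (-(γ / N) ^ 2 / Om i))))
        (𝓝[>] (0:ℝ)) (𝓝 (∏ _i : Fin L, (N:ℝ) ^ 2)) :=
      tendsto_finset_prod _ fun i _ => key i
    have hval : (∏ _i : Fin L, (N:ℝ) ^ 2) = (N:ℝ) ^ (2 * L) := by
      rw [Finset.prod_const, Finset.card_univ, Fintype.card_fin, ← pow_mul, mul_comm]
    rw [← hval]
    exact hprod.congr (fun γ => by rw [hf, hg, ← Finset.prod_div_distrib])
  have hcobdd : IsCoboundedUnder (· ≤ ·) (𝓝[>] (0:ℝ)) ratio :=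
    isCoboundedUnder_le_of_le _ (fun γ => div_nonneg ENNReal.toReal_nonneg ENNReal.toReal_nonneg)
  calc Filter.limsup ratio (𝓝[>] (0:ℝ))
      ≤ Filter.limsup (fun γ => f γ / g γ) (𝓝[>] (0:ℝ)) :=
        limsup_le_limsup hle hcobdd hlim.isBoundedUnder_le
    _ = (N:ℝ) ^ (2 * L) := hlim.limsup_eq
end

section
/- Let Q_1 denote the first-order Marcum Q-function and let F(γ) = 1 − Q_1(√(2K), √(2(K+1)/Ω)·γ) be the Rice(K, Ω) CDF. Then F(γ) ~ ((K+1)·e^{−K}/Ω)·γ² as γ → 0⁺. -/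
open Real Topology Filter intervalIntegral

/-- The modified Bessel function of the first kind of order `0`,
`I₀(x) = (1/π) ∫_0^π exp(x cos θ) dθ`. -/
noncomputable def besselI0 (x : ℝ) : ℝ :=
  (1 / Real.pi) * ∫ θ in (0:ℝ)..Real.pi, Real.exp (x * Real.cos θ)

/-- The Rice(K, Ω) density `f(r) = (2r(K+1)/Ω)·exp(−K − (K+1)r²/Ω)·I₀(2r√(K(K+1)/Ω))`. -/
noncomputable def riceDensity (K Om r : ℝ) : ℝ :=
  2 * r * (K + 1) / Om * Real.exp (-K - (K + 1) * r ^ 2 / Om) *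
    besselI0 (2 * r * Real.sqrt (K * (K + 1) / Om))

/-- The Rice(K, Ω) CDF `F(γ) = ∫_0^γ f(r) dr = 1 − Q₁(√(2K), √(2(K+1)/Ω)·γ)`,
where `Q₁` is the first-order Marcum Q-function. -/
noncomputable def riceCDF (K Om γ : ℝ) : ℝ :=
  ∫ r in (0:ℝ)..γ, riceDensity K Om r

@[fun_prop] lemma continuous_besselI0 : Continuous besselI0 := by
  have h : Continuous (Function.uncurry fun (x θ : ℝ) => Real.exp (x * Real.cos θ)) := by
    fun_prop
  exact continuous_const.mul
    (intervalIntegral.continuous_parametric_intervalIntegral_of_continuous' h 0 Real.pi)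

lemma besselI0_zero : besselI0 0 = 1 := by
  simp [besselI0, Real.pi_ne_zero]

lemma continuous_riceDensity (K Om : ℝ) (hOm : Om ≠ 0) : Continuous (riceDensity K Om) := by
  unfold riceDensity
  fun_prop (disch := assumption)

/-- The Rice CDF satisfies `F(γ) ~ ((K+1)·e^{−K}/Ω)·γ²` as `γ → 0⁺`. -/
theorem riceCDF_asymptotic (K Om : ℝ) (hK : 0 ≤ K) (hOm : 0 < Om) :
    Filter.Tendsto
      (fun γ : ℝ => riceCDF K Om γ / ((K + 1) * Real.exp (-K) / Om * γ ^ 2))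
      (𝓝[>] 0) (𝓝 1) := by
  set c : ℝ := (K + 1) * Real.exp (-K) / Om with hc
  have hOm' : Om ≠ 0 := ne_of_gt hOm
  have hcont := continuous_riceDensity K Om hOm'
  have hcpos : 0 < c := by
    apply div_pos (mul_pos (by linarith) (Real.exp_pos _)) hOm
  -- main tendsto: riceCDF / γ² → c
  have hmain : Filter.Tendsto (fun γ : ℝ => riceCDF K Om γ / γ ^ 2) (𝓝[>] 0) (𝓝 c) := by
    apply HasDerivAt.lhopital_zero_nhdsGT (f' := riceDensity K Om)
      (g' := fun γ => 2 * γ)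
    · filter_upwards with x
      exact intervalIntegral.integral_hasDerivAt_right
        (hcont.intervalIntegrable _ _)
        (hcont.stronglyMeasurableAtFilter _ _) hcont.continuousAt
    · filter_upwards with x
      simpa using (hasDerivAt_pow 2 x)
    · filter_upwards [self_mem_nhdsWithin] with x hx
      have : (0:ℝ) < x := hx
      positivity
    · have h0 : riceCDF K Om 0 = 0 := by simp [riceCDF]
      have : Continuous (riceCDF K Om) :=
        intervalIntegral.continuous_primitive (fun a b => hcont.intervalIntegrable a b) 0
      exact (this.tendsto' 0 0 h0).mono_left nhdsWithin_le_nhds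
    · have : Filter.Tendsto (fun γ : ℝ => (γ:ℝ) ^ 2) (𝓝[>] 0) (𝓝 0) := by
        simpa using ((continuous_pow 2).tendsto (0:ℝ)).mono_left nhdsWithin_le_nhds
      exact this
    · -- riceDensity x / (2x) → c
      have heq : ∀ x ∈ Set.Ioi (0:ℝ), riceDensity K Om x / (2 * x) =
          (K + 1) / Om * Real.exp (-K - (K + 1) * x ^ 2 / Om) *
            besselI0 (2 * x * Real.sqrt (K * (K + 1) / Om)) := by
        intro x hx
        have hx' : (x:ℝ) ≠ 0 := ne_of_gt hx
        unfold riceDensity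
        field_simp
      have hlim : Filter.Tendsto (fun x : ℝ => (K + 1) / Om *
          Real.exp (-K - (K + 1) * x ^ 2 / Om) *
            besselI0 (2 * x * Real.sqrt (K * (K + 1) / Om))) (𝓝[>] 0) (𝓝 c) := by
        have hc' : c = (K + 1) / Om * Real.exp (-K - (K + 1) * 0 ^ 2 / Om) *
            besselI0 (2 * 0 * Real.sqrt (K * (K + 1) / Om)) := by
          simp [hc, besselI0_zero]
          ring
        rw [hc']
        apply ContinuousAt.tendsto _ |>.mono_left nhdsWithin_le_nhds
        fun_prop (disch := assumption)
      exact Filter.Tendsto.congr' (by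
        filter_upwards [self_mem_nhdsWithin] with x hx
        exact (heq x hx).symm) hlim
  have : Filter.Tendsto (fun γ : ℝ => riceCDF K Om γ / γ ^ 2 / c) (𝓝[>] 0)
      (𝓝 (c / c)) := hmain.div_const c
  rw [div_self (ne_of_gt hcpos)] at this
  refine this.congr fun γ => ?_
  rw [div_div, mul_comm]
end
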